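/- Let |Ψ₀⟩ be a π-LME state, i.e., |Ψ₀⟩ = 2^{-n/2} Σ_x (-1)^{b_x} |x⟩ with b_x ∈ {0,1}, and let S_j = σ₁^{(j)} ⊗ U_j (acting as σ₁ on qubit j and a diagonal unitary U_j on the rest) be a generalized stabilizer generator with S_j|Ψ_i⟩ = (-1)^{i_j}|Ψ_i⟩ where |Ψ_i⟩ = σ₃^{i}|Ψ₀⟩. Then for any computational basis string k ∈ {0,1}^{n-1} on the qubits other than j and any |l⟩ ∈ {|+⟩, |−⟩} on qubit j such that ⟨l, k|Ψ_i⟩ ≠ 0, it holds that ⟨Ψ_i| S_j |Ψ_i⟩ = ⟨l, k| S_j |l, k⟩. -/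

import Mathlib

open Matrix Complex

noncomputable section

def σ : Fin 4 → Matrix (Fin 2) (Fin 2) ℂ
  | 0 => 1
  | 1 => !![0, 1; 1, 0]
  | 2 => !![0, -Complex.I; Complex.I, 0]
  | 3 => !![1, 0; 0, -1]

def pauliString (n : ℕ) (j : Fin n → Fin 4) :
    Matrix (Fin n → Fin 2) (Fin n → Fin 2) ℂ :=
  Matrix.of fun x y => ∏ i, σ (j i) (x i) (y i)

/-- `σ₃^{i}` for a bitstring `i`. -/
def sigma3Str (n : ℕ) (i : Fin n → Fin 2) : Matrix (Fin n → Fin 2) (Fin n → Fin 2) ℂ :=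
  pauliString n fun k => if i k = 1 then 3 else 0

/-- The product vector `|l, k⟩` with `|l⟩ ∈ {|+⟩, |−⟩}` (sign `ε ∈ {1,-1}`) in slot `j`
and computational basis bits `k` (recorded by a function `k' : Fin n → Fin 2` whose value
at `j` is irrelevant) elsewhere. -/
def prodVec (n : ℕ) (j : Fin n) (ε : ℂ) (k' : Fin n → Fin 2) : (Fin n → Fin 2) → ℂ :=
  fun x => if ∀ i, i ≠ j → x i = k' i then (Real.sqrt 2 : ℂ)⁻¹ * ε ^ (x j : ℕ) else 0

/-! The amplitudes of `Ψ = σ₃^{i} Ψ₀` are all `±2^{-n/2}`, so `Ψ` is a unit vector and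
`⟨Ψ|S|Ψ⟩ = ε`. On the line of bitstrings agreeing with `k` off slot `j`, `|l, k⟩` has amplitudes
`(1, ±1)/√2`, and its overlap with `Ψ` is nonzero exactly when `Ψ` has the same relative sign
there, i.e. when `|l, k⟩` is a multiple of the restriction of `Ψ` to that line. As `S` only
flips bit `j`, it commutes with this restriction, so `|l, k⟩` is a unit `ε`-eigenvector of `S`
too, and `⟨l, k|S|l, k⟩ = ε`. -/

theorem star_dotProduct_self_of_eq_or_eq_neg {ι : Type*} [Fintype ι] {v : ι → ℂ} {r : ℝ}
    (hv : ∀ x, v x = r ∨ v x = -r) : star v ⬝ᵥ v = Fintype.card ι * r ^ 2 := by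
  have hsq : ∀ x, star (v x) * v x = r ^ 2 := fun x => by
    rcases hv x with h | h <;> simp [h, sq]
  simp only [dotProduct, Pi.star_apply, hsq, Finset.sum_const, nsmul_eq_mul, Finset.card_univ]

theorem mulVec_indicator {ι R : Type*} [Fintype ι] [NonUnitalNonAssocSemiring R]
    {S : Matrix ι ι R} {s : Set ι} (hS : ∀ x y, S x y ≠ 0 → (x ∈ s ↔ y ∈ s)) (v : ι → R) :
    S *ᵥ s.indicator v = s.indicator (S *ᵥ v) := by
  ext x
  by_cases hx : x ∈ s
  · rw [Set.indicator_of_mem hx]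
    refine Finset.sum_congr rfl fun y _ => ?_
    by_cases hxy : S x y = 0
    · simp [hxy]
    · rw [Set.indicator_of_mem ((hS x y hxy).mp hx)]
  · rw [Set.indicator_of_notMem hx]
    refine Finset.sum_eq_zero fun y _ => ?_
    by_cases hxy : S x y = 0
    · simp [hxy]
    · rw [Set.indicator_of_notMem fun hy => hx ((hS x y hxy).mpr hy), mul_zero]

theorem eq_mul_of_add_mul_ne_zero {R : Type*} [CommRing R] {a b r s : R}
    (ha : a = r ∨ a = -r) (hb : b = r ∨ b = -r) (hs : s = 1 ∨ s = -1) (h : a + s * b ≠ 0) :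
    b = s * a := by
  rcases ha with rfl | rfl <;> rcases hb with rfl | rfl <;> rcases hs with rfl | rfl <;>
    first | ring1 | (exfalso; exact h (by ring))

theorem sigma3Str_eq_diagonal (n : ℕ) (i : Fin n → Fin 2) :
    sigma3Str n i =
      diagonal fun x => (-1) ^ (Finset.univ.filter fun k => i k = 1 ∧ x k = 1).card := by
  have hσ : ∀ (a b c : Fin 2), σ (if a = 1 then 3 else 0) b c =
      if b = c then (if a = 1 ∧ b = 1 then -1 else 1) else 0 := by
    intro a b c
    fin_cases a <;> fin_cases b <;> fin_cases c <;> simp [σ]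
  ext x y
  simp only [sigma3Str, pauliString, of_apply, hσ, diagonal_apply]
  split_ifs with hxy
  · subst hxy
    simp [Finset.prod_ite]
  · obtain ⟨k, hk⟩ := Function.ne_iff.mp hxy
    exact Finset.prod_eq_zero (Finset.mem_univ k) (if_neg hk)

theorem sigma3Str_mulVec_apply_eq_or_eq_neg {n : ℕ} (i : Fin n → Fin 2)
    {v : (Fin n → Fin 2) → ℂ} {r : ℂ} (hv : ∀ x, v x = r ∨ v x = -r) (x : Fin n → Fin 2) :
    (sigma3Str n i *ᵥ v) x = r ∨ (sigma3Str n i *ᵥ v) x = -r := by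
  rw [sigma3Str_eq_diagonal, mulVec_diagonal]
  rcases neg_one_pow_eq_or ℂ (Finset.univ.filter fun k => i k = 1 ∧ x k = 1).card with h | h <;>
    rcases hv x with hx | hx <;> simp [h, hx]

def coordLine {n : ℕ} (j : Fin n) (k' : Fin n → Fin 2) : Set (Fin n → Fin 2) :=
  {x | ∀ i, i ≠ j → x i = k' i}

section CoordLine

variable {n : ℕ} {j : Fin n} {k' : Fin n → Fin 2}

theorem mem_coordLine_iff {x : Fin n → Fin 2} :
    x ∈ coordLine j k' ↔ x = Function.update k' j (x j) := by
  simp [coordLine, Function.eq_update_iff]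

theorem mem_coordLine_congr {x y : Fin n → Fin 2} (h : ∀ i, i ≠ j → x i = y i) :
    x ∈ coordLine j k' ↔ y ∈ coordLine j k' :=
  forall₂_congr fun i hi => by rw [h i hi]

theorem prodVec_eq_indicator (ε : ℂ) :
    prodVec n j ε k' =
      (coordLine j k').indicator fun x => (Real.sqrt 2 : ℂ)⁻¹ * ε ^ (x j : ℕ) := by
  ext x
  simp [prodVec, coordLine, Set.indicator_apply]

theorem prodVec_apply_update (ε : ℂ) (a : Fin 2) :
    prodVec n j ε k' (Function.update k' j a) = (Real.sqrt 2 : ℂ)⁻¹ * ε ^ (a : ℕ) := by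
  rw [prodVec_eq_indicator, Set.indicator_of_mem (mem_coordLine_iff.mpr (by simp)),
    Function.update_self]

theorem star_prodVec_dotProduct (ε : ℂ) (w : (Fin n → Fin 2) → ℂ) :
    star (prodVec n j ε k') ⬝ᵥ w =
      (Real.sqrt 2 : ℂ)⁻¹ *
        (w (Function.update k' j 0) + star ε * w (Function.update k' j 1)) := by
  have hne : Function.update k' j 0 ≠ Function.update k' j 1 := fun h => by
    simpa using congrFun h j
  have hoff : ∀ x, x ≠ Function.update k' j 0 ∧ x ≠ Function.update k' j 1 →
      star (prodVec n j ε k' x) * w x = 0 := by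
    rintro x ⟨h0, h1⟩
    have hx : x ∉ coordLine j k' := by
      rw [mem_coordLine_iff]
      rcases Fin.exists_fin_two.mp ⟨x j, rfl⟩ with h | h <;> rw [h] <;> assumption
    simp [prodVec_eq_indicator, hx]
  simp only [dotProduct, Pi.star_apply]
  rw [Fintype.sum_eq_add _ _ hne hoff]
  simp only [prodVec_apply_update, Fin.val_zero, Fin.val_one, pow_zero, pow_one, mul_one,
    star_mul', star_inv₀, Complex.star_def, Complex.conj_ofReal]
  ring

theorem star_prodVec_dotProduct_self {ε : ℂ} (hε : ε = 1 ∨ ε = -1) :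
    star (prodVec n j ε k') ⬝ᵥ prodVec n j ε k' = 1 := by
  have hsqrt : (Real.sqrt 2 : ℂ) ^ 2 = 2 := by
    norm_cast
    exact Real.sq_sqrt zero_le_two
  have hne : (Real.sqrt 2 : ℂ) ≠ 0 := by simp
  rw [star_prodVec_dotProduct, prodVec_apply_update, prodVec_apply_update]
  rcases hε with rfl | rfl <;> field_simp <;> norm_num [hsqrt]

theorem prodVec_eq_smul_indicator {εl : ℂ} (hεl : εl = 1 ∨ εl = -1)
    {Ψ : (Fin n → Fin 2) → ℂ} {r : ℂ} (hΨ : ∀ x, Ψ x = r ∨ Ψ x = -r)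
    (hoverlap : star (prodVec n j εl k') ⬝ᵥ Ψ ≠ 0) :
    prodVec n j εl k' =
      ((Real.sqrt 2 : ℂ)⁻¹ / Ψ (Function.update k' j 0)) • (coordLine j k').indicator Ψ := by
  have hstar : star εl = εl := by rcases hεl with rfl | rfl <;> simp
  rw [star_prodVec_dotProduct, hstar] at hoverlap
  set x₀ := Function.update k' j 0
  have h₁ : Ψ (Function.update k' j 1) = εl * Ψ x₀ :=
    eq_mul_of_add_mul_ne_zero (hΨ _) (hΨ _) hεl (right_ne_zero_of_mul hoverlap)
  have h₀ : Ψ x₀ ≠ 0 := fun h => hoverlap (by simp [h, h₁])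
  have hline : ∀ a : Fin 2, Ψ (Function.update k' j a) = εl ^ (a : ℕ) * Ψ x₀ := by
    intro a
    fin_cases a
    · simp [x₀]
    · simpa using h₁
  ext x
  rw [Pi.smul_apply, smul_eq_mul, prodVec_eq_indicator]
  by_cases hx : x ∈ coordLine j k'
  · obtain ⟨a, rfl⟩ : ∃ a, x = Function.update k' j a := ⟨_, mem_coordLine_iff.mp hx⟩
    rw [Set.indicator_of_mem hx, Set.indicator_of_mem hx, hline a, Function.update_self]
    field_simp
  · simp [hx]

end CoordLine

theorem expectation_value_from_product_vector_general (n : ℕ) (j : Fin n)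
    (Ψ₀ : (Fin n → Fin 2) → ℂ) (b : (Fin n → Fin 2) → Bool)
    (hπLME : ∀ x, Ψ₀ x = (if b x then -1 else 1) * (Real.sqrt 2 : ℂ)⁻¹ ^ n)
    (S : Matrix (Fin n → Fin 2) (Fin n → Fin 2) ℂ)
    (u : (Fin n → Fin 2) → ℂ)
    (hS : ∀ x y, S x y =
      if (∀ i, i ≠ j → x i = y i) ∧ x j ≠ y j then u y else 0)
    (i : Fin n → Fin 2) (ε : ℂ)
    (heig : S.mulVec ((sigma3Str n i).mulVec Ψ₀) = ε • (sigma3Str n i).mulVec Ψ₀)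
    (εl : ℂ) (hεl : εl = 1 ∨ εl = -1) (k' : Fin n → Fin 2)
    (hoverlap : star (prodVec n j εl k') ⬝ᵥ (sigma3Str n i).mulVec Ψ₀ ≠ 0) :
    star ((sigma3Str n i).mulVec Ψ₀) ⬝ᵥ S.mulVec ((sigma3Str n i).mulVec Ψ₀) =
      star (prodVec n j εl k') ⬝ᵥ S.mulVec (prodVec n j εl k') := by
  set Ψ := sigma3Str n i *ᵥ Ψ₀
  set r : ℝ := (Real.sqrt 2)⁻¹ ^ n
  have hΨ₀ : ∀ x, Ψ₀ x = r ∨ Ψ₀ x = -r := fun x => by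
    cases hb : b x <;> simp [hπLME, hb, r]
  have hΨ : ∀ x, Ψ x = r ∨ Ψ x = -r := sigma3Str_mulVec_apply_eq_or_eq_neg i hΨ₀
  have hΨ_norm : star Ψ ⬝ᵥ Ψ = 1 := by
    have hr : (2 : ℝ) ^ n * r ^ 2 = 1 := by
      rw [pow_right_comm, inv_pow, Real.sq_sqrt zero_le_two, ← mul_pow,
        mul_inv_cancel₀ two_ne_zero, one_pow]
    rw [star_dotProduct_self_of_eq_or_eq_neg hΨ, Fintype.card_fun, Fintype.card_fin,
      Fintype.card_fin]
    exact_mod_cast hr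
  have hline : ∀ x y, S x y ≠ 0 → (x ∈ coordLine j k' ↔ y ∈ coordLine j k') := by
    intro x y hxy
    rw [hS] at hxy
    exact mem_coordLine_congr (ite_ne_right_iff.mp hxy).1.1
  have hSφ : S *ᵥ prodVec n j εl k' = ε • prodVec n j εl k' := by
    rw [prodVec_eq_smul_indicator hεl hΨ hoverlap, mulVec_smul, mulVec_indicator hline, heig,
      smul_comm]
    exact congrArg _ (Set.indicator_const_smul _ ε Ψ)
  rw [heig, hSφ, dotProduct_smul, dotProduct_smul, hΨ_norm, star_prodVec_dotProduct_self hεl]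

/-- Lemma 1: for a π-LME state `|Ψ₀⟩`, a generalized stabilizer generator
`S_j = σ₁^{(j)} ⊗ U_j` (σ₁ on qubit `j`, diagonal on the rest), Hermitian and unitary,
with `|Ψ_i⟩ = σ₃^{i}|Ψ₀⟩` an eigenvector of `S_j` with eigenvalue `±1`, and any product
vector `|l, k⟩` (`|l⟩ ∈ {|+⟩,|−⟩}`) with `⟨l,k|Ψ_i⟩ ≠ 0`, one has
`⟨Ψ_i|S_j|Ψ_i⟩ = ⟨l,k|S_j|l,k⟩`. -/
theorem expectation_value_from_product_vector (n : ℕ) (j : Fin n)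
    (Ψ₀ : (Fin n → Fin 2) → ℂ) (b : (Fin n → Fin 2) → Bool)
    (hπLME : ∀ x, Ψ₀ x = (if b x then -1 else 1) * (Real.sqrt 2 : ℂ)⁻¹ ^ n)
    (S : Matrix (Fin n → Fin 2) (Fin n → Fin 2) ℂ)
    (u : (Fin n → Fin 2) → ℂ)
    (hu : ∀ y y', (∀ i, i ≠ j → y i = y' i) → u y = u y')
    (hS : ∀ x y, S x y =
      if (∀ i, i ≠ j → x i = y i) ∧ x j ≠ y j then u y else 0)
    (hherm : Sᴴ = S) (hunit : S ∈ Matrix.unitaryGroup (Fin n → Fin 2) ℂ)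
    (i : Fin n → Fin 2) (ε : ℂ) (hε : ε = 1 ∨ ε = -1)
    (heig : S.mulVec ((sigma3Str n i).mulVec Ψ₀) = ε • (sigma3Str n i).mulVec Ψ₀)
    (εl : ℂ) (hεl : εl = 1 ∨ εl = -1) (k' : Fin n → Fin 2)
    (hoverlap : star (prodVec n j εl k') ⬝ᵥ (sigma3Str n i).mulVec Ψ₀ ≠ 0) :
    star ((sigma3Str n i).mulVec Ψ₀) ⬝ᵥ S.mulVec ((sigma3Str n i).mulVec Ψ₀) =
      star (prodVec n j εl k') ⬝ᵥ S.mulVec (prodVec n j εl k') :=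
  expectation_value_from_product_vector_general n j Ψ₀ b hπLME S u hS i ε heig εl hεl k' hoverlap

end
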